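/- Let G be a connected graph, F a minimum feedback edge set of G, and let f, u, v, z, w_1, w_2 be vertices of G such that v ∈ leaves(T(F)) ∖ {f}, w_2 ∈ D_2 is the unique neighbor of v in T(F), u and f form an F-pair, z and v form an F-pair, u F-links f to z, w_1 ∈ P*_F(u,f), and the edge vw_1 belongs to F. Then F'' = (F ∖ {vw_1}) ∪ {vw_2} is a minimum feedback edge set of G, and the set of leaves of T(F) is a proper subset of the set of leaves of T(F''). -/

import Mathlib

open SimpleGraph

/-- `F` is a feedback edge set of `G`: a set of edges of `G` whose removal
makes `G` acyclic. -/
def IsFES {V : Type} (G : SimpleGraph V) (F : Set (Sym2 V)) : Prop :=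
  F ⊆ G.edgeSet ∧ (G.deleteEdges F).IsAcyclic

/-- `F` is a minimum feedback edge set of `G`. -/
def IsMinFES {V : Type} (G : SimpleGraph V) (F : Set (Sym2 V)) : Prop :=
  IsFES G F ∧ ∀ F' : Set (Sym2 V), IsFES G F' → F.ncard ≤ F'.ncard

/-- The set of leaves (degree-one vertices) of a graph. -/
def leavesOf {V : Type} (T : SimpleGraph V) : Set V :=
  {v | (T.neighborSet v).ncard = 1}

/-- The set `D_2` of (non-leaf) vertices of degree exactly two. -/
def D2 {V : Type} (T : SimpleGraph V) : Set V :=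
  {v | (T.neighborSet v).ncard = 2}

/-- The set `D_*` of vertices of degree at least three. -/
def Dstar {V : Type} (T : SimpleGraph V) : Set V :=
  {v | 3 ≤ (T.neighborSet v).ncard}

/-- `u` `F`-links `v` to `f` (in the tree `T = T(F)`): either `v = u` or the
deletion of `u` from `T` leaves no `v–f` path; equivalently, every `v–f` walk
of `T` passes through `u`. -/
def FLinks {V : Type} (T : SimpleGraph V) (u v f : V) : Prop :=
  ∀ p : T.Walk v f, u ∈ p.support

/-- `w` lies on the unique `u–f` path of the tree `T`; equivalently, every
`u–f` walk of `T` passes through `w`. -/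
def OnPath {V : Type} (T : SimpleGraph V) (u f w : V) : Prop :=
  ∀ p : T.Walk u f, w ∈ p.support

/-- `w` is an internal vertex of the unique `u–f` path of the tree `T`,
i.e. `w ∈ P*_F(u,f)`. -/
def OnPathInt {V : Type} (T : SimpleGraph V) (u f w : V) : Prop :=
  OnPath T u f w ∧ w ≠ u ∧ w ≠ f

/-- `u, f` form an `F`-pair (for the tree `T = T(F)`): they are distinct,
joined by a path, and every internal vertex of the unique `u–f` path of `T`
belongs to `D_2`. -/
def IsFPair {V : Type} (T : SimpleGraph V) (u f : V) : Prop :=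
  u ≠ f ∧ T.Reachable u f ∧ ∀ w, OnPathInt T u f w → w ∈ D2 T

/-! Since `v` is a leaf of `T(F)` hanging at `w₂`, trading `vw₁` for `vw₂` merely re-hangs `v`
at `w₁`: the new tree is `T(F) - vw₂ + vw₁`, which is acyclic because `v` is isolated in
`T(F) - vw₂`, and `F''` has the size of `F`. Degrees change only at `w₂` (from 2 to 1) and at
`w₁`, which is not a leaf since it lies in `D_2`; so no leaf is lost and `w₂` becomes one. -/

lemma notMem_leavesOf_of_mem_D2 {V : Type} {T : SimpleGraph V} {x : V} (hx : x ∈ D2 T) :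
    x ∉ leavesOf T := by
  simp only [D2, leavesOf, Set.mem_ofPred_eq] at hx ⊢
  omega

section LeafReattachment

variable {V : Type} {H : SimpleGraph V} {v w₁ w₂ : V}

lemma neighborSet_deleteEdges_sup_edge_self (hv : H.neighborSet v = {w₂}) (hvw₁ : v ≠ w₁) :
    (H.deleteEdges {s(v, w₂)} ⊔ edge v w₁).neighborSet v = {w₁} := by
  ext y
  have hy : H.Adj v y ↔ y = w₂ := by rw [← mem_neighborSet, hv, Set.mem_singleton_iff]
  simp only [neighborSet_sup, Set.mem_union, mem_neighborSet, deleteEdges_adj, edge_adj,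
    Set.mem_singleton_iff, Sym2.eq_iff, hy]
  grind

lemma neighborSet_deleteEdges_sup_edge_of_ne (hv : H.neighborSet v = {w₂}) {x : V}
    (hxv : x ≠ v) (hxw₁ : x ≠ w₁) :
    (H.deleteEdges {s(v, w₂)} ⊔ edge v w₁).neighborSet x = H.neighborSet x \ {v} := by
  ext y
  have hvx : H.Adj v x ↔ x = w₂ := by rw [← mem_neighborSet, hv, Set.mem_singleton_iff]
  simp only [neighborSet_sup, Set.mem_union, mem_neighborSet, deleteEdges_adj, edge_adj,
    Set.mem_singleton_iff, Sym2.eq_iff, Set.mem_sdiff]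
  grind [H.adj_symm]

lemma SimpleGraph.IsAcyclic.deleteEdges_sup_edge (hH : H.IsAcyclic) (hv : H.neighborSet v = {w₂})
    (hvw₁ : v ≠ w₁) : (H.deleteEdges {s(v, w₂)} ⊔ edge v w₁).IsAcyclic := by
  refine (hH.anti (H.deleteEdges_le _)).sup_edge_of_not_reachable
    (not_reachable_of_neighborSet_left_eq_empty hvw₁ ?_)
  refine Set.eq_empty_iff_forall_notMem.mpr fun y hy => ?_
  rw [mem_neighborSet, deleteEdges_adj, ← mem_neighborSet, hv, Set.mem_singleton_iff] at hy
  exact hy.2 (hy.1 ▸ rfl)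

lemma leavesOf_ssubset_deleteEdges_sup_edge (hv : H.neighborSet v = {w₂}) (hvw₁ : v ≠ w₁)
    (hw₁₂ : w₁ ≠ w₂) (hw₁ : w₁ ∉ leavesOf H) (hw₂ : w₂ ∈ D2 H) :
    leavesOf H ⊂ leavesOf (H.deleteEdges {s(v, w₂)} ⊔ edge v w₁) := by
  have hvw₂ : H.Adj v w₂ := by rw [← mem_neighborSet, hv]; rfl
  have hw₂ : (H.neighborSet w₂).ncard = 2 := hw₂
  refine Set.ssubset_iff_exists.mpr ⟨fun x hx => ?_, w₂, ?_, ?_⟩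
  · have hx : (H.neighborSet x).ncard = 1 := hx
    by_cases hxv : x = v
    · subst hxv
      show (_ : Set V).ncard = 1
      rw [neighborSet_deleteEdges_sup_edge_self hv hvw₁, Set.ncard_singleton]
    have hxw₁ : x ≠ w₁ := by rintro rfl; exact hw₁ hx
    have hvx : v ∉ H.neighborSet x := by
      rintro h
      rw [mem_neighborSet, H.adj_comm, ← mem_neighborSet, hv] at h
      subst h
      omega
    show (_ : Set V).ncard = 1
    rwa [neighborSet_deleteEdges_sup_edge_of_ne hv hxv hxw₁, Set.sdiff_singleton_eq_self hvx]
  · show (_ : Set V).ncard = 1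
    rw [neighborSet_deleteEdges_sup_edge_of_ne hv hvw₂.ne' hw₁₂.symm,
      Set.ncard_sdiff_singleton_of_mem (s := H.neighborSet w₂) hvw₂.symm, hw₂]
  · exact notMem_leavesOf_of_mem_D2 hw₂

end LeafReattachment

lemma deleteEdges_insert_sdiff_singleton {V : Type*} {G : SimpleGraph V} {F : Set (Sym2 V)}
    {x y : V} {e : Sym2 V} (hxy : G.Adj x y) (he : e ≠ s(x, y)) :
    G.deleteEdges (insert e (F \ {s(x, y)})) = (G.deleteEdges F).deleteEdges {e} ⊔ edge x y := by
  ext a b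
  simp only [deleteEdges_adj, sup_adj, edge_adj, Set.mem_insert_iff, Set.mem_sdiff,
    Set.mem_singleton_iff]
  grind [G.irrefl, G.adj_symm, Sym2.eq_swap]

lemma IsMinFES.exchange {V : Type} {G : SimpleGraph V} {F : Set (Sym2 V)} (hF : IsMinFES G F)
    {a b : Sym2 V} (haG : a ∈ G.edgeSet) (haF : a ∉ F) (hbF : b ∈ F)
    (hacyc : (G.deleteEdges (insert a (F \ {b}))).IsAcyclic) :
    IsMinFES G (insert a (F \ {b})) := by
  refine ⟨⟨Set.insert_subset haG (Set.sdiff_subset.trans hF.1.1), hacyc⟩, fun F' hF' => ?_⟩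
  rw [Set.ncard_exchange haF hbF]
  exact hF.2 F' hF'

theorem stmt6_general (V : Type) (G : SimpleGraph V)
    (F : Set (Sym2 V)) (hF : IsMinFES G F)
    (f u v w₁ w₂ : V)
    (hw₂D2 : w₂ ∈ D2 (G.deleteEdges F))
    (hw₂nbr : (G.deleteEdges F).neighborSet v = {w₂})
    (hpair : IsFPair (G.deleteEdges F) u f)
    (hw₁ : OnPathInt (G.deleteEdges F) u f w₁)
    (hvw1 : s(v, w₁) ∈ F) :
    IsMinFES G (insert s(v, w₂) (F \ {s(v, w₁)})) ∧
    leavesOf (G.deleteEdges F) ⊂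
      leavesOf (G.deleteEdges (insert s(v, w₂) (F \ {s(v, w₁)}))) := by
  obtain ⟨hvw₂G, hvw₂F⟩ : G.Adj v w₂ ∧ s(v, w₂) ∉ F := by
    rw [← deleteEdges_adj, ← mem_neighborSet, hw₂nbr]; rfl
  have hvw₁ : G.Adj v w₁ := hF.1.1 hvw1
  have hw₁₂ : w₁ ≠ w₂ := by rintro rfl; exact hvw₂F hvw1
  have hswap : G.deleteEdges (insert s(v, w₂) (F \ {s(v, w₁)})) =
      (G.deleteEdges F).deleteEdges {s(v, w₂)} ⊔ edge v w₁ :=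
    deleteEdges_insert_sdiff_singleton hvw₁ (by simp [hw₁₂.symm, hvw₁.ne])
  refine ⟨hF.exchange hvw₂G hvw₂F hvw1 ?_, ?_⟩ <;> rw [hswap]
  · exact hF.1.2.deleteEdges_sup_edge hw₂nbr hvw₁.ne
  · exact leavesOf_ssubset_deleteEdges_sup_edge hw₂nbr hvw₁.ne hw₁₂
      (notMem_leavesOf_of_mem_D2 (hpair.2.2 w₁ hw₁)) hw₂D2

/-- Safeness of Reduction Rule 4: swapping the feedback edge `v w₁` for the
tree edge `v w₂` yields another minimum feedback edge set whose tree has a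
strictly larger set of leaves. -/
theorem stmt6 (V : Type) [Fintype V] (G : SimpleGraph V) (hconn : G.Connected)
    (F : Set (Sym2 V)) (hF : IsMinFES G F)
    (f u v z w₁ w₂ : V)
    (hvleaf : v ∈ leavesOf (G.deleteEdges F)) (hvf : v ≠ f)
    (hw₂D2 : w₂ ∈ D2 (G.deleteEdges F))
    (hw₂nbr : (G.deleteEdges F).neighborSet v = {w₂})
    (hpair : IsFPair (G.deleteEdges F) u f)
    (hpair' : IsFPair (G.deleteEdges F) z v)
    (hlink : FLinks (G.deleteEdges F) u f z)
    (hw₁ : OnPathInt (G.deleteEdges F) u f w₁)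
    (hvw1 : s(v, w₁) ∈ F) :
    IsMinFES G (insert s(v, w₂) (F \ {s(v, w₁)})) ∧
    leavesOf (G.deleteEdges F) ⊂
      leavesOf (G.deleteEdges (insert s(v, w₂) (F \ {s(v, w₁)}))) :=
  stmt6_general V G F hF f u v w₁ w₂ hw₂D2 hw₂nbr hpair hw₁ hvw1
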